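/- arXiv:2011.14023 — 3 statements merged into one kernel-verified Lean document; each statement's English description precedes it below -/
import Mathlib

section
/- Let N ≥ 1, let M ⊆ ℝ^N be a linear subspace, let a : ℝ → ℝ^N and b : ℝ → Sym_N(ℝ) be continuous with b(v) positive semidefinite and with the range of b(v) contained in M for every v ∈ ℝ, let K ⊂ ℝ be compact, and let δ, γ ∈ (0,1). Let ψ : ℂ → ℝ satisfy |ψ(z)| ≤ 1 for all z and ψ(z) = 0 whenever |z| < 1/2. Define L(iτ,ik,v) = i(τ + a(v)·k) + k·b(v)k, ρ = √(τ²+|k|²), the restricted normalized symbol R̃L(iτ,ik,v) = i(τ + (P_{M⊥}a)(v)·P_{M⊥}k)/√(τ² + |P_{M⊥}k|²) (defined when (τ, P_{M⊥}k) ≠ 0), and the restricted normalized elliptic symbol R̃E(ik,v) = (P_M k)·b(v)(P_M k)/|P_M k|² (defined when P_M k ≠ 0). Then there exists a constant C > 0, depending only on δ, γ, N, M, a, b and K, such that for every v ∈ K and every (τ,k) ∈ ℝ × ℝ^N with P_M k ≠ 0 and (τ, P_{M⊥}k) ≠ 0, |ψ(ρ/γ) · ψ(R̃E(ik,v)/δ)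 · ψ(R̃L(iτ,ik,v)/δ)| · (ρ + |P_M k|²) ≤ C · |L(iτ,ik,v)|. -/
/-!
The pointwise symbol estimate underlying the "single-phase" averaging lemmas: on the frequency
region selected by the three cutoffs, the full symbol `L` dominates `√(τ²+|k|²) + |P_M k|²`.
-/

open MeasureTheory Filter Topology RealInnerProductSpace ENNReal NNReal
noncomputable section

/-- `ℝ^N` as a Euclidean space. -/
abbrev Ee (N : ℕ) := EuclideanSpace ℝ (Fin N)

/-- The symbol `L(iτ, ik, v) = i(τ + a(v)·k) + k·b(v)k`. -/
def Lsym (N : ℕ) (a : ℝ → Ee N) (b : ℝ → (Ee N →L[ℝ] Ee N)) (ξ : ℝ × Ee N) (v : ℝ) : ℂ :=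
  Complex.I * ((ξ.1 + ⟪a v, ξ.2⟫ : ℝ) : ℂ) + ((⟪b v ξ.2, ξ.2⟫ : ℝ) : ℂ)

/-- The restricted normalized symbol
`R̃L(iτ, ik, v) = i(τ + (P_{M⊥}a)(v)·P_{M⊥}k)/√(τ² + |P_{M⊥}k|²)`. -/
def RLnorm (N : ℕ) (M : Submodule ℝ (Ee N)) [M.HasOrthogonalProjection] (a : ℝ → Ee N)
    (ξ : ℝ × Ee N) (v : ℝ) : ℂ :=
  Complex.I *
    (((ξ.1 + ⟪(Submodule.orthogonalProjectionOnto Mᗮ (a v) : Ee N), (Submodule.orthogonalProjectionOnto Mᗮ ξ.2 : Ee N)⟫) /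
      Real.sqrt (ξ.1 ^ 2 + ‖(Submodule.orthogonalProjectionOnto Mᗮ ξ.2 : Ee N)‖ ^ 2) : ℝ) : ℂ)

/-- The restricted normalized elliptic symbol `R̃E(ik, v) = (P_M k)·b(v)(P_M k)/|P_M k|²`. -/
def REnorm (N : ℕ) (M : Submodule ℝ (Ee N)) [M.HasOrthogonalProjection]
    (b : ℝ → (Ee N →L[ℝ] Ee N)) (k : Ee N) (v : ℝ) : ℝ :=
  ⟪(Submodule.orthogonalProjectionOnto M k : Ee N), b v (Submodule.orthogonalProjectionOnto M k : Ee N)⟫ /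
    ‖(Submodule.orthogonalProjectionOnto M k : Ee N)‖ ^ 2


private lemma single_phase_arith (A δ γ ρ s m E t : ℝ)
    (hA1 : 1 ≤ A) (hδ0 : 0 < δ) (hδ1 : δ < 1) (hγ0 : 0 < γ)
    (hm0 : 0 < m) (hs0 : 0 < s) (hρ0 : 0 ≤ ρ) (hE0 : 0 ≤ E)
    (hρsm : ρ ≤ s + m) (hρg : γ / 2 ≤ ρ)
    (hm2 : δ / 2 * m ^ 2 ≤ E) (ht : δ / 2 * s ≤ t) (htE : t ≤ E + A * m) :
    ρ + m ^ 2 ≤ ((2 * (4 * A / δ + 1) ^ 2 / γ + 1) * (2 / δ) + 10 / δ) * E := by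
  have hA0 : (0:ℝ) < A := by linarith
  obtain ⟨B, hBdef⟩ : ∃ B : ℝ, B = 4 * A / δ + 1 := ⟨_, rfl⟩
  rw [show 4 * A / δ + 1 = B from hBdef.symm]
  have hB0 : (0:ℝ) < B := by rw [hBdef]; positivity
  have hm2E : m ^ 2 ≤ 2 / δ * E := by
    rw [div_mul_eq_mul_div, le_div_iff₀ hδ0]; nlinarith
  by_cases hcase : s ≤ 4 * A / δ * m
  · have hBm : γ / 2 ≤ B * m := by
      have h1 : ρ ≤ B * m := by rw [hBdef]; nlinarith
      linarith
    have h7 : B * m ≤ 2 * B ^ 2 / γ * m ^ 2 := by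
      rw [div_mul_eq_mul_div, le_div_iff₀ hγ0]
      nlinarith [mul_le_mul_of_nonneg_left hBm (mul_pos hB0 hm0).le]
    have h8 : ρ + m ^ 2 ≤ (2 * B ^ 2 / γ + 1) * m ^ 2 := by nlinarith
    have h9 : (2 * B ^ 2 / γ + 1) * m ^ 2 ≤ (2 * B ^ 2 / γ + 1) * (2 / δ * E) :=
      mul_le_mul_of_nonneg_left hm2E (by positivity)
    rw [← mul_assoc] at h9
    have h10 : 0 ≤ 10 / δ * E := by positivity
    rw [add_mul]
    linarith
  · push_neg at hcase
    have hc : 4 * A * m < δ * s := by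
      rw [div_mul_eq_mul_div, div_lt_iff₀ hδ0] at hcase
      linarith
    have hs4 : δ / 4 * s ≤ E := by nlinarith
    have hms : m ≤ s := by nlinarith
    have h11 : ρ + m ^ 2 ≤ 10 / δ * E := by
      rw [div_mul_eq_mul_div, le_div_iff₀ hδ0]
      have e1 : ρ * δ ≤ 2 * s * δ :=
        mul_le_mul_of_nonneg_right (by linarith) hδ0.le
      nlinarith
    have h10 : 0 ≤ (2 * B ^ 2 / γ + 1) * (2 / δ) * E := by positivity
    rw [add_mul]
    linarith

set_option maxHeartbeats 1000000 in
theorem single_phase_pointwise_symbol_estimate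
    (N : ℕ) (hN : 1 ≤ N)
    (M : Submodule ℝ (Ee N))
    (a : ℝ → Ee N) (ha : Continuous a)
    (b : ℝ → (Ee N →L[ℝ] Ee N)) (hb : Continuous b)
    (hbsym : ∀ (v : ℝ) (x y : Ee N), ⟪b v x, y⟫ = ⟪x, b v y⟫)
    (hbpos : ∀ (v : ℝ) (x : Ee N), 0 ≤ ⟪b v x, x⟫)
    (hrange : ∀ v : ℝ, LinearMap.range (b v : Ee N →ₗ[ℝ] Ee N) ≤ M)
    (K : Set ℝ) (hK : IsCompact K)
    (δ γ : ℝ) (hδ : δ ∈ Set.Ioo (0:ℝ) 1) (hγ : γ ∈ Set.Ioo (0:ℝ) 1)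
    (ψ : ℂ → ℝ) (hψle : ∀ z : ℂ, |ψ z| ≤ 1)
    (hψ0 : ∀ z : ℂ, ‖z‖ < 1 / 2 → ψ z = 0) :
    ∃ C : ℝ, 0 < C ∧
      ∀ v ∈ K, ∀ ξ : ℝ × Ee N,
        (Submodule.orthogonalProjectionOnto M ξ.2 : Ee N) ≠ 0 →
        ¬(ξ.1 = 0 ∧ (Submodule.orthogonalProjectionOnto Mᗮ ξ.2 : Ee N) = 0) →
        |ψ (((Real.sqrt (ξ.1 ^ 2 + ‖ξ.2‖ ^ 2) / γ : ℝ) : ℂ)) *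
            ψ (((REnorm N M b ξ.2 v / δ : ℝ) : ℂ)) *
            ψ (RLnorm N M a ξ v / (δ : ℂ))| *
          (Real.sqrt (ξ.1 ^ 2 + ‖ξ.2‖ ^ 2) + ‖(Submodule.orthogonalProjectionOnto M ξ.2 : Ee N)‖ ^ 2)
        ≤ C * ‖Lsym N a b ξ v‖ := by

  obtain ⟨hδ0, hδ1⟩ := hδ
  obtain ⟨hγ0, hγ1⟩ := hγ
  obtain ⟨A, hA1, hAa⟩ : ∃ A : ℝ, 1 ≤ A ∧ ∀ v ∈ K, ‖a v‖ ≤ A := by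
    obtain ⟨A₀, hA₀⟩ := hK.exists_bound_of_continuousOn ha.continuousOn
    refine ⟨max A₀ 0 + 1, by simp [le_max_right], fun v hv => ?_⟩
    have := hA₀ v hv
    have h2 : A₀ ≤ max A₀ 0 := le_max_left _ _
    linarith
  have hA0 : (0:ℝ) < A := by linarith
  refine ⟨(2 * (4 * A / δ + 1) ^ 2 / γ + 1) * (2 / δ) + 10 / δ, by positivity, ?_⟩
  intro v hv ξ hkM hτkP
  set τ : ℝ := ξ.1 with hτdef
  set k : Ee N := ξ.2 with hkdef
  set kM : Ee N := (Submodule.orthogonalProjectionOnto M k : Ee N) with hkMdef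
  set kP : Ee N := (Submodule.orthogonalProjectionOnto Mᗮ k : Ee N) with hkPdef
  set m : ℝ := ‖kM‖ with hmdef
  have hm0 : 0 < m := norm_pos_iff.2 hkM
  -- positivity of s
  have hsq0 : 0 < τ ^ 2 + ‖kP‖ ^ 2 := by
    rcases eq_or_ne τ 0 with h | h
    · have hkP0 : kP ≠ 0 := fun hh => hτkP ⟨h, hh⟩
      have : 0 < ‖kP‖ := norm_pos_iff.2 hkP0
      nlinarith [sq_nonneg τ]
    · have h1 : 0 < τ ^ 2 := by positivity
      nlinarith [sq_nonneg ‖kP‖]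
  set s : ℝ := Real.sqrt (τ ^ 2 + ‖kP‖ ^ 2) with hsdef
  have hs0 : 0 < s := Real.sqrt_pos.2 hsq0
  set ρ : ℝ := Real.sqrt (τ ^ 2 + ‖k‖ ^ 2) with hρdef
  have hρ0 : 0 ≤ ρ := Real.sqrt_nonneg _
  -- b annihilates kP
  have hkPmem : kP ∈ Mᗮ := (Submodule.orthogonalProjectionOnto Mᗮ k).2
  have hbkP : b v kP = 0 := by
    have h0 : ⟪b v kP, b v kP⟫ = 0 := by
      rw [hbsym, real_inner_comm]
      exact (Submodule.mem_orthogonal M kP).1 hkPmem (b v (b v kP))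
        (hrange v ⟨b v kP, rfl⟩)
    exact inner_self_eq_zero.1 h0
  have hdec : kM + kP = k := by
      have h := M.starProjection_add_starProjection_orthogonal k
      rwa [Submodule.starProjection_apply, Submodule.starProjection_apply] at h
  have hbk : ⟪b v k, k⟫ = ⟪b v kM, kM⟫ := by
    conv_lhs => rw [← hdec]
    rw [map_add, hbkP, add_zero, inner_add_right]
    have h1 : ⟪b v kM, kP⟫ = 0 :=
      (Submodule.mem_orthogonal M kP).1 hkPmem (b v kM) (hrange v ⟨kM, rfl⟩)
    rw [h1, add_zero]
  -- projection of a
  have haP : ⟪(Submodule.orthogonalProjectionOnto Mᗮ (a v) : Ee N), kP⟫ = ⟪a v, kP⟫ := by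
    have hsub : a v - (Submodule.orthogonalProjectionOnto Mᗮ (a v) : Ee N) ∈ Mᗮᗮ :=
      by
        have h := Submodule.sub_starProjection_mem_orthogonal (K := Mᗮ) (a v)
        rwa [Submodule.starProjection_apply] at h
    have h0 : ⟪a v - (Submodule.orthogonalProjectionOnto Mᗮ (a v) : Ee N), kP⟫ = 0 := by
      rw [real_inner_comm]
      exact (Submodule.mem_orthogonal Mᗮ _).1 hsub kP hkPmem
    rw [inner_sub_left] at h0
    linarith
  have hak : ⟪a v, k⟫ = (τ + ⟪a v, kP⟫) - τ + ⟪a v, kM⟫ := by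
    conv_lhs => rw [← hdec]
    rw [inner_add_right]; ring
  -- Pythagoras
  have hnorm : ‖k‖ ^ 2 = m ^ 2 + ‖kP‖ ^ 2 := by
    have h := Submodule.norm_sq_eq_add_norm_sq_projection (𝕜 := ℝ) k M
    rw [← Submodule.norm_coe (Submodule.orthogonalProjectionOnto M k),
      ← Submodule.norm_coe (Submodule.orthogonalProjectionOnto Mᗮ k)] at h
    exact h
  have hρsm : ρ ≤ s + m := by
    have h1 : ρ = Real.sqrt (s ^ 2 + m ^ 2) := by
      rw [hρdef, hsdef, Real.sq_sqrt hsq0.le, hnorm]; ring_nf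
    rw [h1]
    have h2 : s ^ 2 + m ^ 2 ≤ (s + m) ^ 2 := by nlinarith [hs0.le, hm0.le]
    calc Real.sqrt (s ^ 2 + m ^ 2) ≤ Real.sqrt ((s + m) ^ 2) := Real.sqrt_le_sqrt h2
      _ = s + m := Real.sqrt_sq (by positivity)
  -- real and imaginary parts of L
  set E : ℝ := ‖Lsym N a b ξ v‖ with hEdef
  have hE0 : 0 ≤ E := norm_nonneg _
  have hre : (Lsym N a b ξ v).re = ⟪b v k, k⟫ := by
    simp [Lsym, ← hkdef]
  have him : (Lsym N a b ξ v).im = τ + ⟪a v, k⟫ := by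
    simp [Lsym, ← hkdef, ← hτdef]
  have hreE : ⟪b v kM, kM⟫ ≤ E := by
    have h1 : |(Lsym N a b ξ v).re| ≤ E := Complex.abs_re_le_norm _
    rw [hre, hbk] at h1
    exact (le_abs_self _).trans h1
  have himE : |τ + ⟪a v, k⟫| ≤ E := by
    have h1 : |(Lsym N a b ξ v).im| ≤ E := Complex.abs_im_le_norm _
    rwa [him] at h1
  -- dispose of trivial cases where a cutoff vanishes
  have hRHS0 : 0 ≤ (2 * (4 * A / δ + 1) ^ 2 / γ + 1) * (2 / δ) + 10 / δ := by positivity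
  by_cases hψ1 : ψ (((ρ / γ : ℝ) : ℂ)) = 0
  · rw [hψ1]; simp only [zero_mul, abs_zero]
    exact mul_nonneg hRHS0 (norm_nonneg _)
  by_cases hψ2 : ψ (((REnorm N M b ξ.2 v / δ : ℝ) : ℂ)) = 0
  · rw [hψ2]; simp only [mul_zero, zero_mul, abs_zero]
    exact mul_nonneg hRHS0 (norm_nonneg _)
  by_cases hψ3 : ψ (RLnorm N M a ξ v / (δ : ℂ)) = 0
  · rw [hψ3]; simp only [mul_zero, abs_zero, zero_mul]
    exact mul_nonneg hRHS0 (norm_nonneg _)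
  -- extract the lower bounds from the cutoffs
  have hcut1 : γ / 2 ≤ ρ := by
    have h1 : ¬ ‖(((ρ / γ : ℝ) : ℂ))‖ < 1 / 2 := fun h => hψ1 (hψ0 _ h)
    rw [Complex.norm_real, Real.norm_eq_abs, abs_of_nonneg (by positivity)] at h1
    push_neg at h1
    rw [le_div_iff₀ hγ0] at h1
    linarith
  have hbposM : 0 ≤ ⟪b v kM, kM⟫ := hbpos v kM
  have hcut2 : δ / 2 * m ^ 2 ≤ ⟪b v kM, kM⟫ := by
    have h1 : ¬ ‖(((REnorm N M b ξ.2 v / δ : ℝ) : ℂ))‖ < 1 / 2 :=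
      fun h => hψ2 (hψ0 _ h)
    have hREval : REnorm N M b ξ.2 v = ⟪b v kM, kM⟫ / m ^ 2 := by
      rw [REnorm]
      congr 1
      rw [← hbsym]
    rw [Complex.norm_real, Real.norm_eq_abs, hREval] at h1
    rw [abs_of_nonneg (by positivity)] at h1
    push_neg at h1
    rw [le_div_iff₀ hδ0, div_mul_eq_mul_div, le_div_iff₀ (by positivity : (0:ℝ) < m ^ 2)] at h1
    nlinarith
  have hcut3 : δ / 2 * s ≤ |τ + ⟪a v, kP⟫| := by
    have h1 : ¬ ‖(RLnorm N M a ξ v / (δ : ℂ))‖ < 1 / 2 :=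
      fun h => hψ3 (hψ0 _ h)
    push_neg at h1
    rw [norm_div, RLnorm] at h1
    rw [norm_mul, Complex.norm_I, one_mul, Complex.norm_real, Real.norm_eq_abs, Complex.norm_real,
        Real.norm_eq_abs] at h1
    rw [abs_of_pos hδ0, abs_div, abs_of_pos hs0, haP] at h1
    rw [div_div, le_div_iff₀ (by positivity)] at h1
    linarith
  -- bound on the mixed term
  have hakM : |⟪a v, kM⟫| ≤ A * m := by
    calc |⟪a v, kM⟫| ≤ ‖a v‖ * ‖kM‖ := abs_real_inner_le_norm _ _
      _ ≤ A * m := by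
          apply mul_le_mul (hAa v hv) le_rfl (norm_nonneg _) hA0.le
  have htE : |τ + ⟪a v, kP⟫| ≤ E + A * m := by
    have h1 : τ + ⟪a v, k⟫ = (τ + ⟪a v, kP⟫) + ⟪a v, kM⟫ := by rw [hak]; ring
    have h2 : |τ + ⟪a v, kP⟫| ≤ |τ + ⟪a v, k⟫| + |⟪a v, kM⟫| := by
      rw [h1]
      calc |(τ + ⟪a v, kP⟫)| = |((τ + ⟪a v, kP⟫) + ⟪a v, kM⟫) - ⟪a v, kM⟫| := by ring_nf
        _ ≤ |(τ + ⟪a v, kP⟫) + ⟪a v, kM⟫| + |⟪a v, kM⟫| := abs_sub _ _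
    linarith
  -- the ψ product is at most 1
  have hψprod : |ψ (((ρ / γ : ℝ) : ℂ)) * ψ (((REnorm N M b ξ.2 v / δ : ℝ) : ℂ)) *
      ψ (RLnorm N M a ξ v / (δ : ℂ))| ≤ 1 := by
    rw [abs_mul, abs_mul]
    have h1 := hψle (((ρ / γ : ℝ) : ℂ))
    have h2 := hψle (((REnorm N M b ξ.2 v / δ : ℝ) : ℂ))
    have h3 := hψle (RLnorm N M a ξ v / (δ : ℂ))
    exact mul_le_one₀ (mul_le_one₀ h1 (abs_nonneg _) h2) (abs_nonneg _) h3
  have hmain : ρ + m ^ 2 ≤ ((2 * (4 * A / δ + 1) ^ 2 / γ + 1) * (2 / δ) + 10 / δ) * E :=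
    single_phase_arith A δ γ ρ s m E |τ + ⟪a v, kP⟫| hA1 hδ0 hδ1 hγ0 hm0 hs0 hρ0 hE0
      hρsm hcut1 (hcut2.trans hreE) hcut3 htE
  calc |ψ (((ρ / γ : ℝ) : ℂ)) * ψ (((REnorm N M b ξ.2 v / δ : ℝ) : ℂ)) *
        ψ (RLnorm N M a ξ v / (δ : ℂ))| * (ρ + m ^ 2)
      ≤ 1 * (ρ + m ^ 2) :=
        mul_le_mul_of_nonneg_right hψprod (add_nonneg hρ0 (sq_nonneg m))
    _ = ρ + m ^ 2 := one_mul _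
    _ ≤ ((2 * (4 * A / δ + 1) ^ 2 / γ + 1) * (2 / δ) + 10 / δ) * E := hmain
end
end

section
/- Let 0 < 𝔷 < 1, 𝔷 < α ≤ 1, L > 0, and A ≥ 0, and let h : ℝ → ℂ satisfy h(v) = 0 for |v| > L and |h(v) − h(w)| ≤ A |v − w|^α for all v, w ∈ ℝ. Then: (i) for every v ∈ ℝ, ∫_ℝ |h(v) − h(w)| / |v−w|^{1+𝔷} dw < ∞, so the singular integral ((−Δ)^{𝔷/2}-type expression) I(v) = ∫_ℝ (h(v) − h(w)) / |v−w|^{1+𝔷} dw converges absolutely; and (ii) there exists a constant C, depending only on 𝔷, α, L, A and sup_ℝ |h|, such that |I(v)| ≤ C (1 + |v|)^{−(1+𝔷)} for all v ∈ ℝ; in particular, for |v| > 2L one has I(v) = −∫_{−L}^{L} h(w)/|v−w|^{1+𝔷} dw and |I(v)| ≤ C |v|^{−(1+𝔷)}. -/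
/-!
The analytic core of the paper's proposition on the fractional Laplacian in the velocity
variable: for a compactly supported `α`-Hölder function `h` with `α > 𝔷`, the singular
integral representing `(−Δ_v)^{𝔷/2} h` converges absolutely and decays like `(1+|v|)^{−(1+𝔷)}`.
-/

open MeasureTheory Filter Topology ENNReal NNReal
noncomputable section

open Real Set in
private lemma aux_integrable_pair (p q A B : ℝ) (hp : -1 < p) (hq : q < -1) :
    Integrable (fun x : ℝ => if |x| ≤ 1 then A * |x| ^ p else B * |x| ^ q) volume := by
  set G : ℝ → ℝ := fun x => if |x| ≤ 1 then A * |x| ^ p else B * |x| ^ q with hG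
  have hGeven : ∀ x : ℝ, G (-x) = G x := by intro x; simp [hG, abs_neg]
  have hpos : IntegrableOn G (Ioi (0:ℝ)) volume := by
    rw [← Ioc_union_Ioi_eq_Ioi (zero_le_one : (0:ℝ) ≤ 1), integrableOn_union]
    constructor
    · have h1 : IntegrableOn (fun x : ℝ => x ^ p) (Ioc (0:ℝ) 1) volume := by
        rw [← intervalIntegrable_iff_integrableOn_Ioc_of_le zero_le_one]
        exact intervalIntegral.intervalIntegrable_rpow' hp
      exact (IntegrableOn.congr_fun (h1.const_mul A))
        (fun x hx => by
          simp only [hG, abs_of_pos hx.1, if_pos hx.2]) measurableSet_Ioc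
    · have h2 : IntegrableOn (fun x : ℝ => x ^ q) (Ioi (1:ℝ)) volume :=
        integrableOn_Ioi_rpow_of_lt hq one_pos
      exact (IntegrableOn.congr_fun (h2.const_mul B))
        (fun x hx => by
          have hx1 : (1:ℝ) < x := hx
          simp only [hG, abs_of_pos (lt_trans one_pos hx1), if_neg (not_le.2 hx1)]) measurableSet_Ioi
  rw [← integrableOn_univ, ← Iio_union_Ici (a := (0:ℝ)), integrableOn_union,
    integrableOn_Ici_iff_integrableOn_Ioi]
  refine ⟨?_, hpos⟩
  rw [← (Measure.measurePreserving_neg (volume : Measure ℝ)).integrableOn_comp_preimage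
      (Homeomorph.neg ℝ).measurableEmbedding]
  simpa [Function.comp_def, hGeven, neg_Iio] using hpos

theorem fractional_laplacian_singular_integral
    (𝔷 α L A : ℝ) (h𝔷0 : 0 < 𝔷) (h𝔷1 : 𝔷 < 1) (hα1 : 𝔷 < α) (hα2 : α ≤ 1)
    (hL : 0 < L) (hA : 0 ≤ A)
    (h : ℝ → ℂ)
    (hsupp : ∀ v : ℝ, L < |v| → h v = 0)
    (hHolder : ∀ v w : ℝ, ‖h v - h w‖ ≤ A * |v - w| ^ α) :
    -- (i) absolute convergence of the singular integral
    (∀ v : ℝ, Integrable (fun w : ℝ => ‖h v - h w‖ / |v - w| ^ (1 + 𝔷)) volume) ∧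
    -- (ii) quantitative decay of the singular integral
    (∃ C : ℝ, 0 < C ∧
      (∀ v : ℝ,
        ‖∫ w : ℝ, (h v - h w) / ((|v - w| ^ (1 + 𝔷) : ℝ) : ℂ)‖ ≤
          C * (1 + |v|) ^ (-(1 + 𝔷))) ∧
      (∀ v : ℝ, 2 * L < |v| →
        (∫ w : ℝ, (h v - h w) / ((|v - w| ^ (1 + 𝔷) : ℝ) : ℂ)) =
          -(∫ w in Set.Icc (-L) L, h w / ((|v - w| ^ (1 + 𝔷) : ℝ) : ℂ)) ∧
        ‖∫ w : ℝ, (h v - h w) / ((|v - w| ^ (1 + 𝔷) : ℝ) : ℂ)‖ ≤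
          C * |v| ^ (-(1 + 𝔷)))) := by
  have hα0 : 0 < α := lt_trans h𝔷0 hα1
  set s : ℝ := 1 + 𝔷 with hs_def
  have hs0 : 0 < s := by simp only [hs_def]; linarith
  -- boundedness of h
  set M : ℝ := A * (2 * L + 1) ^ α with hM_def
  have hM0 : 0 ≤ M := mul_nonneg hA (Real.rpow_nonneg (by linarith) _)
  have hM : ∀ v : ℝ, ‖h v‖ ≤ M := by
    intro v
    by_cases hv : L < |v|
    · rw [hsupp v hv, norm_zero]; exact hM0
    · push_neg at hv
      have hz : h (v + (2 * L + 1)) = 0 := by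
        apply hsupp
        have h1 : -L ≤ v := neg_le_of_abs_le hv
        calc L < L + 1 := by linarith
          _ ≤ 2 * L + 1 + v := by linarith
          _ ≤ |v + (2 * L + 1)| := by rw [add_comm]; exact le_abs_self _
      have h3 : ‖h v‖ ≤ A * |v - (v + (2 * L + 1))| ^ α := by
        have := hHolder v (v + (2 * L + 1))
        rwa [hz, sub_zero] at this
      have habs : |v - (v + (2 * L + 1))| = 2 * L + 1 := by
        rw [show v - (v + (2 * L + 1)) = -(2 * L + 1) by ring, abs_neg,
          abs_of_pos (by linarith : (0:ℝ) < 2 * L + 1)]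
      rw [habs] at h3
      rw [hM_def]
      exact h3
  -- continuity of h
  have hcont : Continuous h := by
    have H : HolderWith A.toNNReal α.toNNReal h := by
      intro x y
      rw [edist_dist, edist_dist]
      calc ENNReal.ofReal (dist (h x) (h y))
          ≤ ENNReal.ofReal (A * dist x y ^ α) := by
            apply ENNReal.ofReal_le_ofReal
            rw [dist_eq_norm, Real.dist_eq]
            exact hHolder x y
        _ = ↑A.toNNReal * ENNReal.ofReal (dist x y) ^ (α.toNNReal : ℝ) := by
            rw [ENNReal.ofReal_mul hA, Real.coe_toNNReal α hα0.le,
              ENNReal.ofReal_rpow_of_nonneg dist_nonneg hα0.le]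
            rfl
    exact H.continuous (by simpa using hα0)
  -- dominating function
  set q : ℝ := α - s with hq_def
  set G : ℝ → ℝ := fun x => if |x| ≤ 1 then A * |x| ^ q else (2 * M) * |x| ^ (-s) with hG_def
  have hGint : Integrable G volume :=
    aux_integrable_pair q (-s) A (2 * M) (by rw [hq_def, hs_def]; linarith) (by linarith)
  have hGv : ∀ v : ℝ, Integrable (fun w => G (v - w)) volume := fun v => hGint.comp_sub_left v
  -- pointwise domination
  have hdom : ∀ v w : ℝ, ‖h v - h w‖ / |v - w| ^ s ≤ G (v - w) := by
    intro v w
    by_cases hr1 : |v - w| ≤ 1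
    · rw [hG_def]; simp only [if_pos hr1]
      rcases eq_or_lt_of_le (abs_nonneg (v - w)) with hr0 | hr0
      · have hvw : v = w := sub_eq_zero.mp (abs_eq_zero.mp hr0.symm)
        rw [hvw, sub_self, norm_zero, zero_div]
        exact mul_nonneg hA (Real.rpow_nonneg (abs_nonneg _) _)
      · have hden : 0 < |v - w| ^ s := Real.rpow_pos_of_pos hr0 _
        calc ‖h v - h w‖ / |v - w| ^ s ≤ (A * |v - w| ^ α) / |v - w| ^ s :=
              div_le_div_of_nonneg_right (hHolder v w) hden.le
          _ = A * |v - w| ^ q := by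
              rw [hq_def, Real.rpow_sub hr0, mul_div_assoc]
    · rw [hG_def]; simp only [if_neg hr1]
      push_neg at hr1
      have hr0 : (0:ℝ) < |v - w| := lt_trans one_pos hr1
      have hden : 0 < |v - w| ^ s := Real.rpow_pos_of_pos hr0 _
      calc ‖h v - h w‖ / |v - w| ^ s ≤ (2 * M) / |v - w| ^ s := by
            apply div_le_div_of_nonneg_right _ hden.le
            calc ‖h v - h w‖ ≤ ‖h v‖ + ‖h w‖ := norm_sub_le _ _
              _ ≤ 2 * M := by linarith [hM v, hM w]
        _ = (2 * M) * |v - w| ^ (-s) := by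
            rw [Real.rpow_neg (abs_nonneg _), div_eq_mul_inv]
  -- measurability of the norm-quotient
  have hKmeas : ∀ v : ℝ, AEStronglyMeasurable
      (fun w : ℝ => ‖h v - h w‖ / |v - w| ^ s) volume := by
    intro v
    have hden_cont : Continuous fun w : ℝ => |v - w| ^ s :=
      (continuous_const.sub continuous_id).abs.rpow_const (fun w => Or.inr hs0.le)
    exact ((continuous_const.sub hcont).norm.measurable.div
      hden_cont.measurable).aestronglyMeasurable
  -- (i)
  have hKint : ∀ v : ℝ, Integrable (fun w : ℝ => ‖h v - h w‖ / |v - w| ^ s) volume := by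
    intro v
    apply (hGv v).mono' (hKmeas v)
    apply Filter.Eventually.of_forall
    intro w
    rw [Real.norm_eq_abs,
      abs_of_nonneg (div_nonneg (norm_nonneg _) (Real.rpow_nonneg (abs_nonneg _) _))]
    exact hdom v w
  refine ⟨hKint, ?_⟩
  -- the complex integrand and its norm
  have hnormeq : ∀ v w : ℝ, ‖(h v - h w) / ((|v - w| ^ s : ℝ) : ℂ)‖
      = ‖h v - h w‖ / |v - w| ^ s := by
    intro v w
    rw [norm_div, Complex.norm_real, Real.norm_eq_abs,
      abs_of_nonneg (Real.rpow_nonneg (abs_nonneg _) _)]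
  set D : ℝ := ∫ x, G x with hD_def
  have hGnonneg : ∀ x : ℝ, 0 ≤ G x := by
    intro x
    rw [hG_def]
    dsimp only
    split
    · exact mul_nonneg hA (Real.rpow_nonneg (abs_nonneg _) _)
    · exact mul_nonneg (by linarith) (Real.rpow_nonneg (abs_nonneg _) _)
  have hD0 : 0 ≤ D := integral_nonneg hGnonneg
  -- global bound by D
  have hsmall : ∀ v : ℝ, ‖∫ w : ℝ, (h v - h w) / ((|v - w| ^ s : ℝ) : ℂ)‖ ≤ D := by
    intro v
    calc ‖∫ w : ℝ, (h v - h w) / ((|v - w| ^ s : ℝ) : ℂ)‖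
        ≤ ∫ w : ℝ, ‖(h v - h w) / ((|v - w| ^ s : ℝ) : ℂ)‖ := norm_integral_le_integral_norm _
      _ = ∫ w : ℝ, ‖h v - h w‖ / |v - w| ^ s := by simp only [hnormeq]
      _ ≤ ∫ w : ℝ, G (v - w) := integral_mono (hKint v) (hGv v) (hdom v)
      _ = D := by rw [hD_def]; exact integral_sub_left_eq_self G volume v
  -- identity and bound for large |v|
  have hlarge : ∀ v : ℝ, 2 * L < |v| →
      ((∫ w : ℝ, (h v - h w) / ((|v - w| ^ s : ℝ) : ℂ)) =
        -(∫ w in Set.Icc (-L) L, h w / ((|v - w| ^ s : ℝ) : ℂ)) ∧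
      ‖∫ w : ℝ, (h v - h w) / ((|v - w| ^ s : ℝ) : ℂ)‖ ≤ 2 * L * (M * 2 ^ s * |v| ^ (-s))) := by
    intro v hv
    have hvpos : 0 < |v| := by linarith
    have hv0 : h v = 0 := hsupp v (by linarith)
    have hcomp : ∀ w : ℝ, w ∉ Set.Icc (-L) L → h w = 0 := by
      intro w hw
      apply hsupp
      rw [Set.mem_Icc, not_and_or] at hw
      rcases hw with hw | hw <;> push_neg at hw
      · exact lt_abs.2 (Or.inr (by linarith))
      · exact lt_abs.2 (Or.inl hw)
    have hident : (∫ w : ℝ, (h v - h w) / ((|v - w| ^ s : ℝ) : ℂ)) =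
        -(∫ w in Set.Icc (-L) L, h w / ((|v - w| ^ s : ℝ) : ℂ)) := by
      have heq : (fun w : ℝ => (h v - h w) / ((|v - w| ^ s : ℝ) : ℂ))
          = fun w : ℝ => -(h w / ((|v - w| ^ s : ℝ) : ℂ)) := by
        funext w; rw [hv0, zero_sub, neg_div]
      rw [heq, integral_neg, setIntegral_eq_integral_of_forall_compl_eq_zero
        (fun w hw => by rw [hcomp w hw, zero_div])]
    refine ⟨hident, ?_⟩
    rw [hident, norm_neg]
    have hbound : ∀ w ∈ Set.Icc (-L) L,
        ‖h w / ((|v - w| ^ s : ℝ) : ℂ)‖ ≤ M * 2 ^ s * |v| ^ (-s) := by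
      intro w hw
      have hwL : |w| ≤ L := abs_le.2 ⟨hw.1, hw.2⟩
      have hdist : |v| / 2 ≤ |v - w| := by
        have := abs_sub_abs_le_abs_sub v w
        linarith
      have hhalf : (0:ℝ) < |v| / 2 := by linarith
      have h1 : ‖h w / ((|v - w| ^ s : ℝ) : ℂ)‖ = ‖h w‖ / |v - w| ^ s := by
        rw [norm_div, Complex.norm_real, Real.norm_eq_abs,
          abs_of_nonneg (Real.rpow_nonneg (abs_nonneg _) _)]
      rw [h1]
      have h2 : ‖h w‖ / |v - w| ^ s ≤ M / (|v| / 2) ^ s :=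
        div_le_div₀ hM0 (hM w) (Real.rpow_pos_of_pos hhalf _)
          (Real.rpow_le_rpow hhalf.le hdist hs0.le)
      apply h2.trans_eq
      rw [Real.rpow_neg (abs_nonneg v), Real.div_rpow (abs_nonneg v) (by norm_num : (0:ℝ) ≤ 2)]
      have hvs : |v| ^ s ≠ 0 := ne_of_gt (Real.rpow_pos_of_pos hvpos _)
      have h2s : (2:ℝ) ^ s ≠ 0 := ne_of_gt (Real.rpow_pos_of_pos two_pos _)
      field_simp
    have hfin : volume (Set.Icc (-L) L) < ⊤ := measure_Icc_lt_top
    have hle := norm_setIntegral_le_of_norm_le_const hfin hbound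
    apply hle.trans_eq
    rw [measureReal_def, Real.volume_Icc, ENNReal.toReal_ofReal (by linarith : (0:ℝ) ≤ L - -L)]
    ring
  -- choose the constant
  have h2LM : (0:ℝ) ≤ 2 * L * M := mul_nonneg (by linarith) hM0
  have hXpos : (0:ℝ) < D + 2 * L * M + 1 := by linarith
  have h2Lpos : (0:ℝ) < (2 + 2 * L) ^ s := Real.rpow_pos_of_pos (by linarith) _
  have h4pos : (0:ℝ) < (4:ℝ) ^ s := Real.rpow_pos_of_pos (by norm_num) _
  have h4s : (1:ℝ) ≤ (4:ℝ) ^ s := Real.one_le_rpow (by norm_num) hs0.le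
  have h2Ls : (1:ℝ) ≤ (2 + 2 * L) ^ s := Real.one_le_rpow (by linarith) hs0.le
  have h2spos : (0:ℝ) < (2:ℝ) ^ s := Real.rpow_pos_of_pos two_pos _
  have hgbound : ∀ v : ℝ, ‖∫ w : ℝ, (h v - h w) / ((|v - w| ^ s : ℝ) : ℂ)‖ ≤
      (D + 2 * L * M + 1) * (2 + 2 * L) ^ s * 4 ^ s * (1 + |v|) ^ (-s) := by
    intro v
    have h1v : (0:ℝ) < 1 + |v| := by positivity
    have h1vs : (0:ℝ) < (1 + |v|) ^ s := Real.rpow_pos_of_pos h1v _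
    by_cases hv : |v| ≤ 2 * L + 1
    · apply (hsmall v).trans
      have hkey : D ≤ (D + 2 * L * M + 1) * 4 ^ s := by
        calc D ≤ (D + 2 * L * M + 1) * 1 := by linarith
          _ ≤ (D + 2 * L * M + 1) * 4 ^ s := mul_le_mul_of_nonneg_left h4s hXpos.le
      have hmono : (1 + |v|) ^ s ≤ (2 + 2 * L) ^ s :=
        Real.rpow_le_rpow (by positivity) (by linarith [abs_nonneg v]) hs0.le
      have hinv : ((2 + 2 * L) ^ s)⁻¹ ≤ ((1 + |v|) ^ s)⁻¹ := by
        apply inv_anti₀ h1vs hmono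
      have hone : (1:ℝ) ≤ (2 + 2 * L) ^ s * (1 + |v|) ^ (-s) := by
        rw [Real.rpow_neg h1v.le]
        calc (1:ℝ) = (2 + 2 * L) ^ s * ((2 + 2 * L) ^ s)⁻¹ := by
              rw [mul_inv_cancel₀ (ne_of_gt h2Lpos)]
          _ ≤ (2 + 2 * L) ^ s * ((1 + |v|) ^ s)⁻¹ :=
              mul_le_mul_of_nonneg_left hinv h2Lpos.le
      calc D ≤ (D + 2 * L * M + 1) * 4 ^ s := hkey
        _ = (D + 2 * L * M + 1) * 4 ^ s * 1 := by ring
        _ ≤ (D + 2 * L * M + 1) * 4 ^ s * ((2 + 2 * L) ^ s * (1 + |v|) ^ (-s)) :=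
            mul_le_mul_of_nonneg_left hone (by positivity)
        _ = (D + 2 * L * M + 1) * (2 + 2 * L) ^ s * 4 ^ s * (1 + |v|) ^ (-s) := by ring
    · push_neg at hv
      have hv2L : 2 * L < |v| := by linarith
      have hvpos : (0:ℝ) < |v| := by linarith
      apply (hlarge v hv2L).2.trans
      have hvs : (0:ℝ) < |v| ^ s := Real.rpow_pos_of_pos hvpos _
      have h3 : (1 + |v|) ^ s ≤ 2 ^ s * |v| ^ s := by
        rw [← Real.mul_rpow (by norm_num) (abs_nonneg v)]
        exact Real.rpow_le_rpow (by positivity) (by linarith) hs0.le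
      rw [Real.rpow_neg (abs_nonneg v), Real.rpow_neg h1v.le,
        show 2 * L * (M * 2 ^ s * (|v| ^ s)⁻¹) = (2 * L * M * 2 ^ s) / |v| ^ s by ring,
        show (D + 2 * L * M + 1) * (2 + 2 * L) ^ s * 4 ^ s * ((1 + |v|) ^ s)⁻¹
          = ((D + 2 * L * M + 1) * (2 + 2 * L) ^ s * 4 ^ s) / (1 + |v|) ^ s by ring,
        div_le_div_iff₀ hvs h1vs]
      have h4eq : (4:ℝ) ^ s = 2 ^ s * 2 ^ s := by
        rw [← Real.mul_rpow (by norm_num) (by norm_num)]; norm_num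
      calc 2 * L * M * 2 ^ s * (1 + |v|) ^ s
          ≤ 2 * L * M * 2 ^ s * (2 ^ s * |v| ^ s) :=
            mul_le_mul_of_nonneg_left h3 (by positivity)
        _ = (2 * L * M) * ((2 ^ s * 2 ^ s) * |v| ^ s) := by ring
        _ = (2 * L * M) * (4 ^ s * |v| ^ s) := by rw [h4eq]
        _ ≤ (D + 2 * L * M + 1) * (4 ^ s * |v| ^ s) := by
            apply mul_le_mul_of_nonneg_right (by linarith) (by positivity)
        _ = ((D + 2 * L * M + 1) * (4 ^ s * |v| ^ s)) * 1 := by ring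
        _ ≤ ((D + 2 * L * M + 1) * (4 ^ s * |v| ^ s)) * (2 + 2 * L) ^ s := by
            apply mul_le_mul_of_nonneg_left h2Ls (by positivity)
        _ = (D + 2 * L * M + 1) * (2 + 2 * L) ^ s * 4 ^ s * |v| ^ s := by ring
  refine ⟨(D + 2 * L * M + 1) * (2 + 2 * L) ^ s * 4 ^ s,
    mul_pos (mul_pos hXpos h2Lpos) h4pos, hgbound, ?_⟩
  intro v hv
  refine ⟨(hlarge v hv).1, ?_⟩
  have hvpos : (0:ℝ) < |v| := by linarith
  have hmono : (1 + |v|) ^ (-s) ≤ |v| ^ (-s) :=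
    Real.rpow_le_rpow_of_nonpos hvpos (by linarith) (by linarith)
  exact (hgbound v).trans (mul_le_mul_of_nonneg_left hmono
    (mul_nonneg (mul_nonneg hXpos.le h2Lpos.le) h4pos.le))
end
end

section
/- For γ > 0 and r ≥ 0, define ζ_γ(r) = ∫_{{τ ∈ ℝ : τ² + r² ≥ γ²/4}} (τ² + r²)^{−1} dτ. Then: ζ_γ(0) = 4/γ; for 0 < r < γ/2, ζ_γ(r) = ( π − 2 arctan √( γ²/(4r²) − 1 ) ) / r; and for r ≥ γ/2, ζ_γ(r) = π / r. Moreover, for each fixed γ > 0 the function r ↦ (1 + r) ζ_γ(r) is bounded on [0, ∞). -/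
/-!
The explicit frequency integral `ζ_γ` from the paper's analysis of the stochastic term:
the `τ`-integral of `(τ² + r²)⁻¹` over the region `τ² + r² ≥ γ²/4`, and its boundedness
after multiplication by `1 + r`.
-/

open MeasureTheory Filter Topology
noncomputable section

/-- `ζ_γ(r) = ∫_{τ² + r² ≥ γ²/4} (τ² + r²)⁻¹ dτ`. -/
def zeta (γ r : ℝ) : ℝ :=
  ∫ τ in {τ : ℝ | γ ^ 2 / 4 ≤ τ ^ 2 + r ^ 2}, (τ ^ 2 + r ^ 2)⁻¹

open Set Real

lemma zg_fun_eq {r : ℝ} (hr : 0 < r) :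
    (fun τ : ℝ => (τ ^ 2 + r ^ 2)⁻¹) = fun τ : ℝ => (r ^ 2)⁻¹ * (1 + (τ / r) ^ 2)⁻¹ := by
  funext τ
  rw [← mul_inv]
  congr 1
  field_simp
  ring

lemma zg_integrable {r : ℝ} (hr : 0 < r) :
    Integrable (fun τ : ℝ => (τ ^ 2 + r ^ 2)⁻¹) := by
  rw [zg_fun_eq hr]
  exact (integrable_inv_one_add_sq.comp_div hr.ne').const_mul _

lemma zg_integral_univ {r : ℝ} (hr : 0 < r) :
    ∫ τ : ℝ, (τ ^ 2 + r ^ 2)⁻¹ = π / r := by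
  rw [zg_fun_eq hr, integral_const_mul,
    Measure.integral_comp_div (fun x : ℝ => (1 + x ^ 2)⁻¹) r,
    integral_univ_inv_one_add_sq, smul_eq_mul, abs_of_pos hr]
  field_simp

lemma zg_integral_Ioi {r : ℝ} (hr : 0 < r) (a : ℝ) :
    ∫ τ in Ioi a, (τ ^ 2 + r ^ 2)⁻¹ = (π / 2 - arctan (a / r)) / r := by
  have hderiv : ∀ x ∈ Ici a, HasDerivAt (fun τ : ℝ => arctan (τ / r) / r)
      ((x ^ 2 + r ^ 2)⁻¹) x := by
    intro x _
    have h1 : HasDerivAt (fun τ : ℝ => τ / r) (1 / r) x := by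
      simpa using (hasDerivAt_id x).div_const r
    have h2 := ((Real.hasDerivAt_arctan (x / r)).comp x h1).div_const r
    refine h2.congr_deriv ?_
    field_simp
    ring
  have ht : Tendsto (fun τ : ℝ => arctan (τ / r) / r) atTop (𝓝 ((π / 2) / r)) := by
    exact ((tendsto_nhds_of_tendsto_nhdsWithin tendsto_arctan_atTop).comp
      (tendsto_id.atTop_div_const hr)).div_const r
  have := integral_Ioi_of_hasDerivAt_of_tendsto' hderiv ((zg_integrable hr).integrableOn) ht
  rw [this]
  ring

lemma zg_inv_sq_Ioi {a : ℝ} (ha : 0 < a) :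
    IntegrableOn (fun τ : ℝ => (τ ^ 2)⁻¹) (Ioi a) ∧
      ∫ τ in Ioi a, (τ ^ 2)⁻¹ = a⁻¹ := by
  have hderiv : ∀ x ∈ Ici a, HasDerivAt (fun τ : ℝ => -τ⁻¹) ((x ^ 2)⁻¹) x := by
    intro x hx
    have hx0 : x ≠ 0 := by
      have : a ≤ x := hx
      exact (lt_of_lt_of_le ha this).ne'
    have h := (hasDerivAt_inv hx0).neg; rw [neg_neg] at h; exact h
  have hnn : ∀ x ∈ Ioi a, 0 ≤ (x ^ 2)⁻¹ := fun x _ => by positivity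
  have ht : Tendsto (fun τ : ℝ => -τ⁻¹) atTop (𝓝 0) := by
    simpa using (tendsto_inv_atTop_zero : Tendsto (fun x : ℝ => x⁻¹) atTop (𝓝 0)).neg
  refine ⟨integrableOn_Ioi_deriv_of_nonneg' hderiv hnn ht, ?_⟩
  have := integral_Ioi_of_hasDerivAt_of_nonneg' hderiv hnn ht
  simpa using this

lemma zg_integral_Iic {f : ℝ → ℝ} (hf : ∀ x, f (-x) = f x) (a : ℝ) :
    ∫ τ in Iic (-a), f τ = ∫ τ in Ioi a, f τ := by
  rw [← integral_comp_neg_Ioi]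
  simp_rw [hf]

lemma zg_integrableOn_Iic {f : ℝ → ℝ} (hf : ∀ x, f (-x) = f x) {a : ℝ}
    (h : IntegrableOn f (Ioi a)) : IntegrableOn f (Iic (-a)) := by
  have m : MeasurableEmbedding fun x : ℝ => -x :=
    (Homeomorph.neg ℝ).measurableEmbedding
  have h2 : IntegrableOn f (Iic (-a)) (Measure.map (fun x : ℝ => -x) volume) := by
    rw [m.integrableOn_map_iff]
    simp_rw [Function.comp_def, hf, neg_preimage, neg_Iic, neg_neg]
    exact (integrableOn_Ici_iff_integrableOn_Ioi).mpr h
  have hmap : Measure.map (fun x : ℝ => -x) volume = volume :=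
    Measure.map_neg_eq_self volume
  rwa [hmap] at h2

lemma zg_set_eq {b : ℝ} (hb : 0 ≤ b) :
    {τ : ℝ | b ^ 2 ≤ τ ^ 2} = Iic (-b) ∪ Ici b := by
  ext τ
  simp only [mem_setOf_eq, mem_union, mem_Iic, mem_Ici]
  constructor
  · intro h
    have habs : b ≤ |τ| := by
      nlinarith [sq_abs τ, abs_nonneg τ]
    rcases le_abs.mp habs with h1 | h1
    · right; exact h1
    · left; linarith
  · rintro (h | h) <;> nlinarith

lemma zg_arctan_le_self {x : ℝ} (hx : 0 ≤ x) : arctan x ≤ x := by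
  have h1 : 0 ≤ arctan x := by
    have := Real.arctan_strictMono.monotone hx
    simpa [arctan_zero] using this
  calc arctan x ≤ tan (arctan x) := Real.le_tan h1 (arctan_lt_pi_div_two x)
    _ = x := tan_arctan x

theorem zeta_gamma_computation (γ : ℝ) (hγ : 0 < γ) :
    zeta γ 0 = 4 / γ ∧
    (∀ r : ℝ, 0 < r → r < γ / 2 →
      zeta γ r = (Real.pi - 2 * Real.arctan (Real.sqrt (γ ^ 2 / (4 * r ^ 2) - 1))) / r) ∧
    (∀ r : ℝ, γ / 2 ≤ r → zeta γ r = Real.pi / r) ∧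
    (∃ C : ℝ, ∀ r : ℝ, 0 ≤ r → (1 + r) * zeta γ r ≤ C) := by
  have hπ := Real.pi_pos
  -- Part A : r = 0
  have partA : zeta γ 0 = 4 / γ := by
    unfold zeta
    have hset : {τ : ℝ | γ ^ 2 / 4 ≤ τ ^ 2 + 0 ^ 2} = Iic (-(γ / 2)) ∪ Ici (γ / 2) := by
      rw [show {τ : ℝ | γ ^ 2 / 4 ≤ τ ^ 2 + 0 ^ 2} = {τ : ℝ | (γ / 2) ^ 2 ≤ τ ^ 2} by
        ext τ; simp only [mem_setOf_eq]; constructor <;> intro h <;> nlinarith]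
      exact zg_set_eq (by linarith)
    have heq : (fun τ : ℝ => (τ ^ 2 + 0 ^ 2)⁻¹) = fun τ : ℝ => (τ ^ 2)⁻¹ := by
      funext τ; norm_num
    have ha : (0 : ℝ) < γ / 2 := by linarith
    obtain ⟨hint, hval⟩ := zg_inv_sq_Ioi ha
    have heven : ∀ x : ℝ, ((-x) ^ 2)⁻¹ = (x ^ 2)⁻¹ := fun x => by rw [neg_pow]; ring_nf
    have hint1 : IntegrableOn (fun τ : ℝ => (τ ^ 2)⁻¹) (Iic (-(γ / 2))) :=
      zg_integrableOn_Iic heven hint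
    have hint2 : IntegrableOn (fun τ : ℝ => (τ ^ 2)⁻¹) (Ici (γ / 2)) :=
      (integrableOn_Ici_iff_integrableOn_Ioi).mpr hint
    rw [hset]
    simp only [heq]
    rw [setIntegral_union (Iic_disjoint_Ici.mpr (by intro h; linarith)) measurableSet_Ici
      hint1 hint2, zg_integral_Iic heven, integral_Ici_eq_integral_Ioi, hval]
    field_simp
    norm_num
  -- Part B : 0 < r < γ/2
  have partB : ∀ r : ℝ, 0 < r → r < γ / 2 →
      zeta γ r = (π - 2 * arctan (Real.sqrt (γ ^ 2 / (4 * r ^ 2) - 1))) / r := by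
    intro r hr hrγ
    have hb0 : (0 : ℝ) ≤ γ ^ 2 / 4 - r ^ 2 := by nlinarith
    set b := Real.sqrt (γ ^ 2 / 4 - r ^ 2) with hb
    have hb2 : b ^ 2 = γ ^ 2 / 4 - r ^ 2 := Real.sq_sqrt hb0
    have hbnn : 0 ≤ b := Real.sqrt_nonneg _
    unfold zeta
    have hset : {τ : ℝ | γ ^ 2 / 4 ≤ τ ^ 2 + r ^ 2} = Iic (-b) ∪ Ici b := by
      rw [show {τ : ℝ | γ ^ 2 / 4 ≤ τ ^ 2 + r ^ 2} = {τ : ℝ | b ^ 2 ≤ τ ^ 2} by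
        ext τ; simp only [mem_setOf_eq, hb2]; constructor <;> intro h <;> linarith]
      exact zg_set_eq hbnn
    have heven : ∀ x : ℝ, ((-x) ^ 2 + r ^ 2)⁻¹ = (x ^ 2 + r ^ 2)⁻¹ := fun x => by
      rw [neg_pow]; ring_nf
    have hint := (zg_integrable hr).integrableOn (s := Ioi b)
    rw [hset, setIntegral_union (Iic_disjoint_Ici.mpr (by
        intro h
        have hbpos : 0 < b := Real.sqrt_pos.mpr (by nlinarith)
        linarith)) measurableSet_Ici
      (zg_integrableOn_Iic heven hint) ((integrableOn_Ici_iff_integrableOn_Ioi).mpr hint),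
      zg_integral_Iic heven, integral_Ici_eq_integral_Ioi, zg_integral_Ioi hr]
    have hsqrt : Real.sqrt (γ ^ 2 / (4 * r ^ 2) - 1) = b / r := by
      rw [show γ ^ 2 / (4 * r ^ 2) - 1 = (γ ^ 2 / 4 - r ^ 2) / r ^ 2 by
        field_simp, Real.sqrt_div hb0, Real.sqrt_sq hr.le]
    rw [hsqrt]
    ring
  -- Part C : γ/2 ≤ r
  have partC : ∀ r : ℝ, γ / 2 ≤ r → zeta γ r = π / r := by
    intro r h
    have hr : 0 < r := lt_of_lt_of_le (by linarith) h
    unfold zeta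
    have hset : {τ : ℝ | γ ^ 2 / 4 ≤ τ ^ 2 + r ^ 2} = univ :=
      eq_univ_of_forall fun τ => by simp only [mem_setOf_eq]; nlinarith
    rw [hset, Measure.restrict_univ, zg_integral_univ hr]
  refine ⟨partA, partB, partC, ?_⟩
  -- Part D : boundedness
  refine ⟨max ((1 + γ / 2) * (4 * π / γ)) (2 * π / γ + π), ?_⟩
  intro r hr0
  rcases le_or_gt (γ / 2) r with h | h
  · have hr : 0 < r := lt_of_lt_of_le (by linarith) h
    rw [partC r h]
    have h1 : (1 + r) * (π / r) = π / r + π := by field_simp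
    have h2 : π / r ≤ 2 * π / γ := by
      rw [show 2 * π / γ = π / (γ / 2) by field_simp; try ring]
      gcongr <;> linarith
    rw [h1]
    exact le_trans (by linarith) (le_max_right _ _)
  · -- r < γ/2
    have hζ : zeta γ r ≤ 4 * π / γ := by
      rcases eq_or_lt_of_le hr0 with h0 | hrpos
      · rw [← h0, partA]
        gcongr
        nlinarith [Real.pi_gt_three]
      · rw [partB r hrpos h]
        set x := Real.sqrt (γ ^ 2 / (4 * r ^ 2) - 1) with hx
        have hx1 : 0 < γ ^ 2 / (4 * r ^ 2) - 1 := by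
          rw [sub_pos, lt_div_iff₀ (by positivity)]
          nlinarith
        have hxpos : 0 < x := Real.sqrt_pos.mpr hx1
        have hxnn : 0 ≤ arctan x := by
          have := Real.arctan_strictMono.monotone hxpos.le
          simpa [arctan_zero] using this
        rcases le_or_gt r (γ / 4) with hr4 | hr4
        · -- small r : use arctan bound
          have harc : π - 2 * arctan x = 2 * arctan x⁻¹ := by
            rw [arctan_inv_of_pos hxpos]; ring
          have hle : arctan x⁻¹ ≤ x⁻¹ := zg_arctan_le_self (by positivity)
          have hxr : x * r = Real.sqrt (γ ^ 2 / 4 - r ^ 2) := by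
            rw [hx, show γ ^ 2 / (4 * r ^ 2) - 1 = (γ ^ 2 / 4 - r ^ 2) / r ^ 2 by
              field_simp, Real.sqrt_div (by nlinarith), Real.sqrt_sq hrpos.le]
            field_simp
          have hxr2 : γ / 4 ≤ x * r := by
            rw [hxr]
            rw [show γ / 4 = Real.sqrt ((γ / 4) ^ 2) by rw [Real.sqrt_sq (by linarith)]]
            apply Real.sqrt_le_sqrt
            nlinarith
          have key : (π - 2 * arctan x) / r ≤ 2 / (x * r) := by
            rw [harc]
            rw [div_le_div_iff₀ hrpos (by positivity)]
            have : arctan x⁻¹ * (x * r) ≤ x⁻¹ * (x * r) := by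
              apply mul_le_mul_of_nonneg_right hle (by positivity)
            calc 2 * arctan x⁻¹ * (x * r) ≤ 2 * (x⁻¹ * (x * r)) := by linarith
              _ = 2 * r := by field_simp
          have h2 : 2 / (x * r) ≤ 4 * π / γ := by
            rw [div_le_div_iff₀ (by positivity) hγ]
            have : 4 * π * (x * r) ≥ 4 * π * (γ / 4) := by
              apply mul_le_mul_of_nonneg_left hxr2 (by positivity)
            nlinarith [Real.pi_gt_three]
          linarith
        · -- γ/4 < r : use π/r bound
          have h1 : (π - 2 * arctan x) / r ≤ π / r := by
            gcongr
            linarith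
          have h2 : π / r ≤ 4 * π / γ := by
            rw [show 4 * π / γ = π / (γ / 4) by field_simp; try ring]
            gcongr <;> linarith
          linarith
    have hζnn : 0 ≤ zeta γ r := by
      unfold zeta
      apply integral_nonneg
      intro τ
      positivity
    have : (1 + r) * zeta γ r ≤ (1 + γ / 2) * (4 * π / γ) :=
      mul_le_mul (by linarith) hζ hζnn (by positivity)
    exact le_trans this (le_max_left _ _)
end
end
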